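/- Let k1, k2 ≥ 1, let C1, C2 : Matrix (Fin k1) (Fin k2) ℝ, and set R = C2 − C1. The bi-matrix game (C1, C2) is potential if and only if H_{k1} * R * H_{k2} = 0. -/
import Mathlib


open Matrix

/-- A bi-matrix game `(C1, C2)` is potential if it admits a potential matrix `P`. -/
def IsPotentialBimatrix {k1 k2 : ℕ} (C1 C2 : Matrix (Fin k1) (Fin k2) ℝ) : Prop :=
  ∃ P : Matrix (Fin k1) (Fin k2) ℝ,
    (∀ i i' : Fin k1, ∀ j : Fin k2, C1 i j - C1 i' j = P i j - P i' j) ∧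
    (∀ i : Fin k1, ∀ j j' : Fin k2, C2 i j - C2 i j' = P i j - P i j')

/-- The all-ones `k × k` matrix `𝟙_k 𝟙_kᵀ`. -/
def Jmat (k : ℕ) : Matrix (Fin k) (Fin k) ℝ :=
  Matrix.of fun _ _ => 1

/-- The centering matrix `H_k = I_k - (1/k) 𝟙_k 𝟙_kᵀ`. -/
noncomputable def Hmat (k : ℕ) : Matrix (Fin k) (Fin k) ℝ :=
  1 - (1 / (k : ℝ)) • Jmat k

lemma expandH {k1 k2 : ℕ} (R : Matrix (Fin k1) (Fin k2) ℝ) (c1 c2 : ℝ)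
    (J1 : Matrix (Fin k1) (Fin k1) ℝ) (J2 : Matrix (Fin k2) (Fin k2) ℝ) :
    (1 - c1 • J1) * R * (1 - c2 • J2)
      = R - c1 • (J1 * R) - c2 • (R * J2) + (c1*c2) • (J1 * R * J2) := by
  simp [Matrix.sub_mul, Matrix.mul_sub, Matrix.smul_mul, Matrix.mul_smul, smul_smul,
    Matrix.mul_assoc]
  module

lemma entryH {k1 k2 : ℕ} (R : Matrix (Fin k1) (Fin k2) ℝ) (i : Fin k1) (j : Fin k2) :
    (Hmat k1 * R * Hmat k2) i j
      = R i j - (1/(k1:ℝ)) * (∑ i', R i' j) - (1/(k2:ℝ)) * (∑ j', R i j')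
        + (1/(k1:ℝ)) * ((1/(k2:ℝ)) * (∑ i', ∑ j', R i' j')) := by
  rw [Hmat, Hmat, expandH]
  simp [Matrix.mul_apply, Jmat, Finset.mul_sum, mul_assoc]
  rw [Finset.sum_comm]

theorem stmt9 (k1 k2 : ℕ) (hk1 : 1 ≤ k1) (hk2 : 1 ≤ k2)
    (C1 C2 R : Matrix (Fin k1) (Fin k2) ℝ) (hR : R = C2 - C1) :
    IsPotentialBimatrix C1 C2 ↔ Hmat k1 * R * Hmat k2 = 0 := by
  have hk1' : (k1:ℝ) ≠ 0 := Nat.cast_ne_zero.mpr (by omega)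
  have hk2' : (k2:ℝ) ≠ 0 := Nat.cast_ne_zero.mpr (by omega)
  have hRe : ∀ i j, R i j = C2 i j - C1 i j := by intro i j; rw [hR]; rfl
  constructor
  · rintro ⟨P, h1, h2⟩
    set i0 : Fin k1 := ⟨0, hk1⟩
    set j0 : Fin k2 := ⟨0, hk2⟩
    have hadd : ∀ i j, R i j = (C2 i j0 - P i j0) - (C1 i0 j - P i0 j) := by
      intro i j
      have e2 := h2 i j j0
      have e1 := h1 i i0 j
      rw [hRe]
      linarith
    ext i j
    rw [entryH]
    simp only [hadd, Matrix.zero_apply]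
    simp only [Finset.sum_sub_distrib, Finset.sum_const, Finset.card_univ, Fintype.card_fin,
      nsmul_eq_mul]
    field_simp
    simp only [← Finset.mul_sum]
    ring
  · intro h
    have hz : ∀ i j, R i j - (1/(k1:ℝ)) * (∑ i', R i' j) - (1/(k2:ℝ)) * (∑ j', R i j')
        + (1/(k1:ℝ)) * ((1/(k2:ℝ)) * (∑ i', ∑ j', R i' j')) = 0 := by
      intro i j
      rw [← entryH, h]; rfl
    refine ⟨Matrix.of fun i j => C1 i j + (1/(k1:ℝ)) * (∑ i', R i' j), ?_, ?_⟩
    · intro i i' j; simp only [Matrix.of_apply]; ring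
    · intro i j j'
      have e1 := hz i j
      have e2 := hz i j'
      have : C2 i j - C2 i j' = R i j - R i j' + (C1 i j - C1 i j') := by
        rw [hRe, hRe]; ring
      simp only [Matrix.of_apply]
      rw [this]
      linarith
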